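/- arXiv:1601.01031 — 4 statements merged into one kernel-verified Lean document; each statement's English description precedes it below -/
import Mathlib

section
/- Fix a positive integer d. Let p ≡ 1 (mod d) be an odd prime, a a positive integer, and ω a unit of multiplicative order d modulo p^a. Then the image of the cyclic supercharacter σ_ω modulo p^a is contained in the image of the function g_d : 𝕋^{φ(d)} → ℂ given by g_d(z_1,…,z_{φ(d)}) = Σ_{k=1}^{d} Π_{j=1}^{φ(d)} z_j^{c_{j,k}}, where the integers c_{j,k} are determined by x^k ≡ Σ_{j=1}^{φ(d)} c_{j,k} x^{j−1} (mod Φ_d(x)). -/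
/-!
Write `x` for `ω` in `ℤ/p^aℤ`. As `d ∣ p - 1` is prime to `p` and the kernel of reduction
`(ℤ/p^aℤ)ˣ → (ℤ/pℤ)ˣ` has order `p^(a-1)`, the reduction of `x` is still a primitive `d`-th root
of unity; since `ℤ/p^aℤ` is local, this forces `Φ_d(x) = 0`. Hence `x^k = ∑_j c_{j,k} x^j`, and
with `z_j = e(x^j y / p^a)` on the torus each term `e(x^k y / p^a)` of `σ_ω(y)` equals
`∏_j z_j^{c_{j,k}}`, so `σ_ω(y) = g_d(z)`.
-/

open Finset Pointwise

/-- `e(θ) = exp(2πiθ)`. -/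
noncomputable def e2 (θ : ℝ) : ℂ := Complex.exp (2 * Real.pi * Complex.I * θ)

/-- The cyclic supercharacter `σ_ω : ℤ/nℤ → ℂ` attached to a unit `ω` mod `n`:
`σ_ω(y) = ∑_{j=1}^{d} e(ω^j y / n)` where `d` is the multiplicative order of `ω`. -/
noncomputable def cyclicSuperchar (n : ℕ) (ω : (ZMod n)ˣ) (y : ZMod n) : ℂ :=
  ∑ j ∈ Finset.Icc 1 (orderOf ω),
    e2 (((((ω ^ j : (ZMod n)ˣ) : ZMod n) * y).val : ℝ) / (n : ℝ))

/-- `H m`: the set of traces of matrices in `SU_m(ℂ)` (the filled `m`-cusped hypocycloid). -/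
noncomputable def H (m : ℕ) : Set ℂ :=
  Set.range fun M : Matrix.specialUnitaryGroup (Fin m) ℂ =>
    Matrix.trace (M : Matrix (Fin m) (Fin m) ℂ)

/-- `P m`: the convex hull of `H m` (the filled regular `m`-gon). -/
noncomputable def Pset (m : ℕ) : Set ℂ := convexHull ℝ (H m)

/-- `c_{j,k}` : the coefficient of `x^j` in the remainder of `x^k` mod `Φ_d(x)`. -/
noncomputable def cExp (d j k : ℕ) : ℤ :=
  (((Polynomial.X : Polynomial ℤ) ^ k) %ₘ Polynomial.cyclotomic d ℤ).coeff j

/-- The Laurent-polynomial map `g_d(z_1,…,z_{φ(d)}) = ∑_{k=1}^d ∏_j z_j^{c_{j,k}}`. -/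
noncomputable def gphi (d : ℕ) (z : Fin (Nat.totient d) → ℂ) : ℂ :=
  ∑ k ∈ Finset.Icc 1 d, ∏ j : Fin (Nat.totient d), z j ^ (cExp d (j : ℕ) k)

/-- The image of `g_d` restricted to the torus `𝕋^{φ(d)}`. -/
noncomputable def gImage (d : ℕ) : Set ℂ :=
  {w : ℂ | ∃ z : Fin (Nat.totient d) → ℂ, (∀ j, ‖z j‖ = 1) ∧ gphi d z = w}

/-- The `k`-fold Minkowski sum `A^{⊕k}` of a subset of `ℂ` with itself. -/
def minkSumPow (A : Set ℂ) (k : ℕ) : Set ℂ :=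
  {z : ℂ | ∃ f : Fin k → ℂ, (∀ i, f i ∈ A) ∧ ∑ i, f i = z}

/-- Scaling a subset of `ℂ` by a real number. -/
def scale (r : ℝ) (A : Set ℂ) : Set ℂ := (fun z => (r : ℂ) * z) '' A

/-- The sets `A k` fill out `B` as `k → ∞`. -/
def FillsOut (A : ℕ → Set ℂ) (B : Set ℂ) : Prop :=
  (∀ k, A k ⊆ B) ∧
    ∀ U : Set ℂ, IsOpen U → U.Nonempty → U ⊆ B → ∃ K : ℕ, ∀ k > K, (U ∩ A k).Nonempty

/-- A subset of `ℂ` has `k`-fold dihedral symmetry if it is stable under complex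
conjugation and under rotation by `2π/k` about the origin. -/
def HasDihedralSymm (k : ℕ) (A : Set ℂ) : Prop :=
  (∀ z ∈ A, (starRingEnd ℂ) z ∈ A) ∧ ∀ z ∈ A, e2 (1 / k) * z ∈ A

/-- The `k`-fold dihedral closure of a subset of `ℂ`. -/
def dihedralClosure (k : ℕ) (A : Set ℂ) : Set ℂ :=
  ⋂₀ {B : Set ℂ | A ⊆ B ∧ HasDihedralSymm k B}

/-- The Gauss sum `g_k(t) = ∑_{j=1}^{p} e(t j^k / p)` of order `k` mod `p`. -/
noncomputable def gaussG (p k : ℕ) (t : ZMod p) : ℂ :=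
  ∑ j ∈ Finset.Icc 1 p, e2 ((((t * (j : ZMod p) ^ k).val : ℕ) : ℝ) / (p : ℝ))

/-- The Gauss sum `G(t,χ) = ∑_{j=1}^{p-1} χ(j) e(tj/p)` attached to a character `χ` mod `p`. -/
noncomputable def GSum (p : ℕ) (χ : DirichletCharacter ℂ p) (t : ZMod p) : ℂ :=
  ∑ j ∈ Finset.Icc 1 (p - 1), χ (j : ZMod p) * e2 ((((t * (j : ZMod p)).val : ℕ) : ℝ) / (p : ℝ))

open Polynomial

theorem orderOf_map_eq_of_coprime_card_ker {G H : Type*} [Group G] [Group H] (f : G →* H)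
    (g : G) (hg : (orderOf g).Coprime (Nat.card f.ker)) : orderOf (f g) = orderOf g := by
  have hker : g ^ orderOf (f g) ∈ f.ker := by
    rw [MonoidHom.mem_ker, map_pow, pow_orderOf_eq_one]
  have hone : orderOf (g ^ orderOf (f g)) = 1 :=
    Nat.eq_one_of_dvd_coprimes hg (orderOf_pow_dvd _) (Subgroup.orderOf_dvd_natCard _ hker)
  exact Nat.dvd_antisymm (orderOf_map_dvd f g)
    (orderOf_dvd_of_pow_eq_one (orderOf_eq_one_iff.mp hone))

theorem ZMod.card_ker_unitsMap_mul_totient {m n : ℕ} [NeZero m] [NeZero n] (h : m ∣ n) :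
    Nat.card (ZMod.unitsMap h).ker * m.totient = n.totient := by
  have hrange : (ZMod.unitsMap h).range = ⊤ :=
    MonoidHom.range_eq_top.mpr (ZMod.unitsMap_surjective h)
  rw [← ZMod.card_units_eq_totient, ← ZMod.card_units_eq_totient, ← Nat.card_eq_fintype_card,
    ← Nat.card_eq_fintype_card, ← (ZMod.unitsMap h).ker.card_mul_index, Subgroup.index_ker,
    hrange, Subgroup.card_top]

theorem ZMod.orderOf_unitsMap_primePow {p a : ℕ} (hp : p.Prime) (ha : a ≠ 0)
    (ω : (ZMod (p ^ a))ˣ) (hω : (orderOf ω).Coprime p) :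
    orderOf (ZMod.unitsMap (dvd_pow_self p ha) ω) = orderOf ω := by
  have : NeZero p := ⟨hp.ne_zero⟩
  have : NeZero (p ^ a) := ⟨pow_ne_zero a hp.ne_zero⟩
  have hker : Nat.card (ZMod.unitsMap (dvd_pow_self p ha)).ker = p ^ (a - 1) := by
    have h := ZMod.card_ker_unitsMap_mul_totient (dvd_pow_self p ha)
    rw [Nat.totient_prime_pow hp (Nat.pos_of_ne_zero ha), Nat.totient_prime hp] at h
    exact Nat.eq_of_mul_eq_mul_right (Nat.sub_pos_of_lt hp.one_lt) h
  exact orderOf_map_eq_of_coprime_card_ker _ ω (hker ▸ hω.pow_right _)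

theorem ZMod.isLocalHom_castHom_primePow {p a : ℕ} [Fact p.Prime] (ha : a ≠ 0) :
    IsLocalHom (ZMod.castHom (dvd_pow_self p ha) (ZMod p)) := by
  have : NeZero (p ^ a) := ⟨pow_ne_zero a (Fact.out : p.Prime).ne_zero⟩
  refine ⟨fun y hy => ?_⟩
  rw [ZMod.castHom_apply, ZMod.cast_eq_val, isUnit_iff_ne_zero, Ne,
    ZMod.natCast_eq_zero_iff] at hy
  rw [← ZMod.natCast_zmod_val y]
  exact (ZMod.isUnit_natCast_iff_not_dvd_pow Fact.out (Nat.pos_of_ne_zero ha)).mpr hy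

/-- The factors `Φ_e(x)`, `e` a proper divisor of `d`, of `x ^ d - 1 = 0` are units because
their images under `f` are nonzero. -/
theorem aeval_cyclotomic_eq_zero_of_isLocalHom {R K : Type*} [CommRing R] [Field K]
    (f : R →+* K) [IsLocalHom f] {d : ℕ} (hd : 0 < d) {x : R} (hx : x ^ d = 1)
    (hfx : IsPrimitiveRoot (f x) d) : aeval x (cyclotomic d ℤ) = 0 := by
  have hunit : ∀ e ∈ d.properDivisors, IsUnit (aeval x (cyclotomic e ℤ)) := by
    intro e he
    obtain ⟨hed, hlt⟩ := Nat.mem_properDivisors.mp he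
    refine isUnit_of_map_unit f _ (isUnit_iff_ne_zero.mpr fun h0 => hlt.not_ge ?_)
    have he : 0 < e := Nat.pos_of_dvd_of_pos hed hd
    have hroot : (cyclotomic e K).IsRoot (f x) := by
      have h1 := (aeval_algHom_apply f.toIntAlgHom x (cyclotomic e ℤ)).trans h0
      rwa [aeval_def, algebraMap_int_eq, eval₂_eq_eval_map, map_cyclotomic_int] at h1
    exact Nat.le_of_dvd he (hfx.dvd_of_pow_eq_one e
      (isRoot_of_unity_of_root_cyclotomic (Nat.mem_divisors_self e he.ne') hroot))
  have hprod :
      aeval x (cyclotomic d ℤ) * ∏ e ∈ d.properDivisors, aeval x (cyclotomic e ℤ) = 0 := by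
    rw [← Finset.prod_insert (f := fun e => aeval x (cyclotomic e ℤ))
      Nat.self_notMem_properDivisors, Nat.insert_self_properDivisors hd.ne', ← map_prod,
      prod_cyclotomic_eq_X_pow_sub_one hd]
    simp [hx]
  exact (IsUnit.prod_iff.mpr hunit).mul_left_eq_zero.mp hprod

theorem pow_eq_sum_cExp_smul_pow {R : Type*} [CommRing R] {d : ℕ} (hd : 0 < d) {x : R}
    (hx : aeval x (cyclotomic d ℤ) = 0) (k : ℕ) :
    x ^ k = ∑ j ∈ Finset.range d.totient, cExp d j k • x ^ j := by
  have hne : cyclotomic d ℤ ≠ 1 := fun h => by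
    simpa [h, (Nat.totient_pos.mpr hd).ne] using natDegree_cyclotomic d ℤ
  have hlt : (X ^ k %ₘ cyclotomic d ℤ).natDegree < d.totient :=
    natDegree_cyclotomic d ℤ ▸ natDegree_modByMonic_lt _ (cyclotomic.monic d ℤ) hne
  have hmod := congrArg (aeval x) (modByMonic_add_div (X ^ k) (cyclotomic d ℤ))
  simp only [map_add, map_mul, map_pow, aeval_X, hx, zero_mul, add_zero] at hmod
  rw [← hmod, aeval_eq_sum_range' hlt]
  rfl

theorem AddChar.map_sum_eq_prod {ι A M : Type*} [AddCommMonoid A] [CommMonoid M]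
    (ψ : AddChar A M) (s : Finset ι) (f : ι → A) :
    ψ (∑ i ∈ s, f i) = ∏ i ∈ s, ψ (f i) :=
  map_prod ψ.toMonoidHom (fun i => Multiplicative.ofAdd (f i)) s

theorem gphi_addChar_eq_sum {R : Type*} [CommRing R] (ψ : AddChar R ℂ) {d : ℕ} (hd : 0 < d)
    {x : R} (hx : aeval x (cyclotomic d ℤ) = 0) (y : R) :
    gphi d (fun j => ψ (x ^ (j : ℕ) * y)) = ∑ k ∈ Finset.Icc 1 d, ψ (x ^ k * y) := by
  refine Finset.sum_congr rfl fun k _ => ?_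
  rw [pow_eq_sum_cExp_smul_pow hd hx k, Finset.sum_mul, AddChar.map_sum_eq_prod,
    ← Fin.prod_univ_eq_prod_range (fun j => ψ (cExp d j k • x ^ j * y))]
  simp only [smul_mul_assoc, AddChar.map_zsmul_eq_zpow]

theorem cyclicSuperchar_eq_sum_stdAddChar (n : ℕ) [NeZero n] (ω : (ZMod n)ˣ) (y : ZMod n) :
    cyclicSuperchar n ω y =
      ∑ k ∈ Finset.Icc 1 (orderOf ω), ZMod.stdAddChar ((ω : ZMod n) ^ k * y) := by
  refine Finset.sum_congr rfl fun k _ => ?_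
  rw [ZMod.stdAddChar_apply, ZMod.toCircle_apply, e2, Units.val_pow_eq_pow_val]
  push_cast
  ring_nf

theorem stmt0_general (d : ℕ) (p : ℕ) (hp : p.Prime)
    (hpd : p ≡ 1 [MOD d]) (a : ℕ) (ha : 0 < a) (ω : (ZMod (p ^ a))ˣ)
    (hω : orderOf ω = d) :
    Set.range (cyclicSuperchar (p ^ a) ω) ⊆ gImage d := by
  have : Fact p.Prime := ⟨hp⟩
  have hd : 0 < d := hω ▸ orderOf_pos ω
  have hdvd : d ∣ p - 1 := (Nat.modEq_iff_dvd' hp.one_le).mp hpd.symm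
  have hcop : d.Coprime p := Nat.Coprime.coprime_dvd_left hdvd
    ((Nat.coprime_self_sub_left hp.one_le).mpr (Nat.coprime_one_left p))
  have hprim : IsPrimitiveRoot (ZMod.castHom (dvd_pow_self p ha.ne') (ZMod p) ω) d := by
    rw [IsPrimitiveRoot.iff_orderOf, ← hω, ← ZMod.orderOf_unitsMap_primePow hp ha.ne' ω
      (hω ▸ hcop), ← orderOf_units, ZMod.unitsMap_val]
    rfl
  have hpow : (ω : ZMod (p ^ a)) ^ d = 1 := by
    rw [← Units.val_pow_eq_pow_val, ← hω, pow_orderOf_eq_one, Units.val_one]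
  have := ZMod.isLocalHom_castHom_primePow (p := p) ha.ne'
  have hcyc : aeval (ω : ZMod (p ^ a)) (cyclotomic d ℤ) = 0 :=
    aeval_cyclotomic_eq_zero_of_isLocalHom _ hd hpow hprim
  rintro _ ⟨y, rfl⟩
  refine ⟨fun j => ZMod.stdAddChar ((ω : ZMod (p ^ a)) ^ (j : ℕ) * y),
    fun j => Circle.norm_coe _, ?_⟩
  rw [gphi_addChar_eq_sum _ hd hcyc, cyclicSuperchar_eq_sum_stdAddChar, hω]

/-- For a positive integer `d`, an odd prime `p ≡ 1 (mod d)`, a positive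
integer `a`, and a unit `ω` of multiplicative order `d` mod `p^a`, the image of the cyclic
supercharacter `σ_ω` mod `p^a` is contained in the image of `g_d` on the torus. -/
theorem stmt0 (d : ℕ) (hd : 0 < d) (p : ℕ) (hp : p.Prime) (hodd : Odd p)
    (hpd : p ≡ 1 [MOD d]) (a : ℕ) (ha : 0 < a) (ω : (ZMod (p ^ a))ˣ)
    (hω : orderOf ω = d) :
    Set.range (cyclicSuperchar (p ^ a) ω) ⊆ gImage d :=
  stmt0_general d p hp hpd a ha ω hω
end

section
/- Let ℓ be an odd prime and b a positive integer. The image of the function g_{ℓ^b} : 𝕋^{φ(ℓ^b)} → ℂ, defined by g_{ℓ^b}(z_1,…,z_{φ(ℓ^b)}) = Σ_{k=1}^{ℓ^b} Π_{j=1}^{φ(ℓ^b)} z_j^{c_{j,k}} where x^k ≡ Σ_{j=1}^{φ(ℓ^b)} c_{j,k} x^{j−1} (mod Φ_{ℓ^b}(x)), equals the ℓ^{b−1}-fold Minkowski sum H_ℓ^{⊕ℓ^{b−1}} of the set H_ℓ with itself. -/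
open Finset Pointwise

/-! For `d = ℓ^(n+1)` we have `Φ_d = ∑_{i<ℓ} X^(i ℓ^n)`, of degree `N = ℓ^n (ℓ-1)`. So `X^k` is
its own remainder for `k < N`, `X^(N+r) ≡ -∑_{i<ℓ-1} X^(r + i ℓ^n)` for `r < ℓ^n`, and `X^d ≡ 1`.
Grouping the coordinates of `z ∈ 𝕋^N` by their index mod `ℓ^n` into blocks `v_r ∈ 𝕋^(ℓ-1)` gives
`g_d(z) = ∑_r (∑_i v_{r,i} + (∏_i v_{r,i})⁻¹)`. Diagonalising, `H_ℓ` is the set of sums of `ℓ`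
unimodular numbers with product `1`, which is exactly the image of `v ↦ ∑_i v_i + (∏_i v_i)⁻¹`
on `𝕋^(ℓ-1)`. -/

open Polynomial

theorem Multiset.exists_fin_map_univ_eq {α : Type*} (s : Multiset α) {m : ℕ}
    (h : Multiset.card s = m) : ∃ g : Fin m → α, univ.val.map g = s := by
  rw [← Multiset.length_toList] at h
  subst h
  exact ⟨s.toList.get, by rw [Fin.univ_val_map, List.ofFn_get, Multiset.coe_toList]⟩

theorem Finset.sum_Icc_one_eq_sum_range {M : Type*} [AddCommMonoid M] {f : ℕ → M} {d : ℕ}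
    (h : f d = f 0) : ∑ k ∈ Icc 1 d, f k = ∑ k ∈ range d, f k := by
  rcases Nat.eq_zero_or_pos d with rfl | hd
  · simp
  rw [← Ico_add_one_right_eq_Icc, sum_Ico_succ_top (by omega), h, range_eq_Ico,
    sum_eq_sum_Ico_succ_bot hd, add_comm]

open scoped Matrix.Norms.L2Operator in
theorem Matrix.norm_eq_one_of_isRoot_charpoly {m : Type*} [Fintype m] [DecidableEq m]
    {U : Matrix m m ℂ} (hU : U ∈ Matrix.unitaryGroup m ℂ) {x : ℂ}
    (hx : U.charpoly.IsRoot x) : ‖x‖ = 1 :=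
  spectrum.norm_eq_one_of_unitary hU (Matrix.mem_spectrum_of_isRoot_charpoly hx)

theorem Matrix.diagonal_mem_specialUnitaryGroup {m : Type*} [Fintype m] [DecidableEq m]
    {g : m → ℂ} (hg : ∀ i, ‖g i‖ = 1) (hprod : ∏ i, g i = 1) :
    Matrix.diagonal g ∈ Matrix.specialUnitaryGroup m ℂ := by
  refine Matrix.mem_specialUnitaryGroup_iff.2 ⟨?_, by rw [Matrix.det_diagonal, hprod]⟩
  rw [Matrix.mem_unitaryGroup_iff, Matrix.star_eq_conjTranspose, Matrix.diagonal_conjTranspose,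
    Matrix.diagonal_mul_diagonal, ← Matrix.diagonal_one]
  congr 1
  funext i
  simp [Complex.mul_conj', hg i]

noncomputable def sumAddInvProd {m : ℕ} (v : Fin m → ℂ) : ℂ := ∑ i, v i + (∏ i, v i)⁻¹

theorem mem_H_iff_exists_prod_eq_one {m : ℕ} {w : ℂ} :
    w ∈ H m ↔ ∃ g : Fin m → ℂ, (∀ i, ‖g i‖ = 1) ∧ ∏ i, g i = 1 ∧ ∑ i, g i = w := by
  constructor
  · rintro ⟨⟨U, hU⟩, rfl⟩
    obtain ⟨hUu, hUdet⟩ := Matrix.mem_specialUnitaryGroup_iff.1 hU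
    have hsplit : U.charpoly.Splits := IsAlgClosed.splits _
    have hcard : Multiset.card U.charpoly.roots = m := by
      rw [(Polynomial.splits_iff_card_roots).1 hsplit, Matrix.charpoly_natDegree_eq_dim,
        Fintype.card_fin]
    obtain ⟨g, hg⟩ := U.charpoly.roots.exists_fin_map_univ_eq hcard
    refine ⟨g, fun i => ?_, ?_, ?_⟩
    · have hi : g i ∈ U.charpoly.roots := hg ▸ Multiset.mem_map_of_mem g (mem_univ i)
      exact Matrix.norm_eq_one_of_isRoot_charpoly hUu (Polynomial.isRoot_of_mem_roots hi)
    · rw [prod_eq_multiset_prod, hg, ← Matrix.det_eq_prod_roots_charpoly_of_splits hsplit, hUdet]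
    · rw [sum_eq_multiset_sum, hg, ← Matrix.trace_eq_sum_roots_charpoly_of_splits hsplit]
  · rintro ⟨g, hg, hprod, rfl⟩
    exact ⟨⟨_, Matrix.diagonal_mem_specialUnitaryGroup hg hprod⟩, Matrix.trace_diagonal g⟩

theorem mem_H_iff_exists_sumAddInvProd {m : ℕ} (hm : 0 < m) {w : ℂ} :
    w ∈ H m ↔ ∃ v : Fin (m - 1) → ℂ, (∀ i, ‖v i‖ = 1) ∧ sumAddInvProd v = w := by
  obtain ⟨m, rfl⟩ : ∃ k, m = k + 1 := ⟨m - 1, (Nat.sub_add_cancel hm).symm⟩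
  rw [mem_H_iff_exists_prod_eq_one, Nat.add_sub_cancel]
  constructor
  · rintro ⟨g, hg, hprod, rfl⟩
    refine ⟨fun i => g i.castSucc, fun i => hg _, ?_⟩
    rw [Fin.prod_univ_castSucc] at hprod
    rw [sumAddInvProd, Fin.sum_univ_castSucc, inv_eq_of_mul_eq_one_right hprod]
  · rintro ⟨v, hv, rfl⟩
    have hnorm : ‖∏ i, v i‖ = 1 := by simp [norm_prod, hv]
    refine ⟨Fin.snoc v (∏ i, v i)⁻¹, Fin.lastCases (by simp [hnorm]) (by simpa using hv), ?_, ?_⟩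
    · have hprod : ∏ i, v i ≠ 0 := norm_ne_zero_iff.1 (hnorm.trans_ne one_ne_zero)
      simp [Fin.prod_univ_castSucc, mul_inv_cancel₀ hprod]
    · simp [Fin.sum_univ_castSucc, sumAddInvProd]

namespace Polynomial

variable {R : Type*} [CommRing R]

theorem X_pow_add_modByMonic_cyclotomic (k d : ℕ) :
    (X ^ (k + d) : R[X]) %ₘ cyclotomic d R = X ^ k %ₘ cyclotomic d R := by
  refine modByMonic_eq_of_dvd_sub (cyclotomic.monic d R) ?_
  rw [show (X ^ (k + d) : R[X]) - X ^ k = X ^ k * (X ^ d - 1) by ring]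
  exact (cyclotomic.dvd_X_pow_sub_one d R).mul_left _

theorem X_pow_modByMonic_cyclotomic_of_lt [Nontrivial R] {d k : ℕ} (hk : k < d.totient) :
    (X ^ k : R[X]) %ₘ cyclotomic d R = X ^ k := by
  rw [modByMonic_eq_self_iff (cyclotomic.monic d R), degree_X_pow, degree_cyclotomic]
  exact_mod_cast hk

theorem X_pow_modByMonic_cyclotomic_prime_pow [Nontrivial R] {ℓ n r : ℕ} (hℓ : ℓ.Prime)
    (hr : r < ℓ ^ n) :
    (X ^ (ℓ ^ n * (ℓ - 1) + r) : R[X]) %ₘ cyclotomic (ℓ ^ (n + 1)) R =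
      -∑ i ∈ range (ℓ - 1), X ^ (r + ℓ ^ n * i) := by
  have hmonic := cyclotomic.monic (ℓ ^ (n + 1)) R
  have hdvd : cyclotomic (ℓ ^ (n + 1)) R ∣
      X ^ (ℓ ^ n * (ℓ - 1) + r) - -∑ i ∈ range (ℓ - 1), X ^ (r + ℓ ^ n * i) := by
    refine ⟨X ^ r, ?_⟩
    obtain ⟨m, rfl⟩ : ∃ m, ℓ = m + 1 := ⟨ℓ - 1, (Nat.sub_add_cancel hℓ.one_le).symm⟩
    rw [cyclotomic_prime_pow_eq_geom_sum hℓ, sum_range_succ, Nat.add_sub_cancel, add_mul,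
      sum_mul, sub_neg_eq_add, add_comm]
    congr 1
    · exact sum_congr rfl fun i _ => by ring
    · ring
  rw [modByMonic_eq_of_dvd_sub hmonic hdvd, modByMonic_eq_self_iff hmonic,
    degree_cyclotomic, Nat.totient_prime_pow_succ hℓ, ← mem_degreeLT]
  refine neg_mem (sum_mem fun i hi => mem_degreeLT.2 ?_)
  rw [degree_X_pow, Nat.cast_lt]
  have := Finset.mem_range.1 hi
  nlinarith

end Polynomial

section CoeffMonomial

variable {G₀ : Type*} [CommGroupWithZero G₀] {N : ℕ} (z : Fin N → G₀)

def coeffMonomial (p : ℤ[X]) : G₀ := ∏ j, z j ^ p.coeff j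

theorem coeffMonomial_neg (p : ℤ[X]) : coeffMonomial z (-p) = (coeffMonomial z p)⁻¹ := by
  simp only [coeffMonomial, coeff_neg, zpow_neg, prod_inv_distrib]

theorem coeffMonomial_sum (hz : ∀ j, z j ≠ 0) {ι : Type*} (s : Finset ι) (p : ι → ℤ[X]) :
    coeffMonomial z (∑ i ∈ s, p i) = ∏ i ∈ s, coeffMonomial z (p i) := by
  classical
  induction s using Finset.induction_on with
  | empty => simp [coeffMonomial]
  | insert a s ha ih =>
    rw [sum_insert ha, prod_insert ha, ← ih]
    simp only [coeffMonomial, coeff_add, zpow_add₀ (hz _), prod_mul_distrib]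

theorem coeffMonomial_X_pow {k : ℕ} (hk : k < N) : coeffMonomial z (X ^ k) = z ⟨k, hk⟩ := by
  have : ∀ j : Fin N, ((j : ℕ) = k ↔ j = ⟨k, hk⟩) := fun j => by rw [Fin.ext_iff]
  simp [coeffMonomial, coeff_X_pow, this]

end CoeffMonomial

section PrimePower

variable {ℓ : ℕ} (hℓ : ℓ.Prime) (n : ℕ)

def finTotientPrimePowEquiv : Fin (ℓ - 1) × Fin (ℓ ^ n) ≃ Fin (ℓ ^ (n + 1)).totient :=
  finProdFinEquiv.trans (finCongr (by rw [Nat.totient_prime_pow_succ hℓ, mul_comm]))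

theorem gphi_prime_pow (z : Fin (ℓ ^ (n + 1)).totient → ℂ) (hz : ∀ j, z j ≠ 0) :
    gphi (ℓ ^ (n + 1)) z =
      ∑ r : Fin (ℓ ^ n), sumAddInvProd fun i => z (finTotientPrimePowEquiv hℓ n (i, r)) := by
  set e := finTotientPrimePowEquiv hℓ n
  set F : ℕ → ℂ := fun k => coeffMonomial z (X ^ k %ₘ cyclotomic (ℓ ^ (n + 1)) ℤ)
  have hN : (ℓ ^ (n + 1)).totient = ℓ ^ n * (ℓ - 1) := Nat.totient_prime_pow_succ hℓ n
  have hd : ℓ ^ (n + 1) = (ℓ ^ (n + 1)).totient + ℓ ^ n := by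
    rw [hN, ← mul_add_one, Nat.sub_add_cancel hℓ.one_le, pow_succ]
  have hF_lt (j : Fin (ℓ ^ (n + 1)).totient) : F j = z j := by
    simp only [F, X_pow_modByMonic_cyclotomic_of_lt j.isLt, coeffMonomial_X_pow z j.isLt]
  have hF_top (r : Fin (ℓ ^ n)) :
      F ((ℓ ^ (n + 1)).totient + r) = (∏ i, z (e (i, r)))⁻¹ := by
    simp only [F, hN, X_pow_modByMonic_cyclotomic_prime_pow hℓ r.isLt, coeffMonomial_neg,
      coeffMonomial_sum z hz]
    rw [← Fin.prod_univ_eq_prod_range]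
    exact congrArg _ (prod_congr rfl fun i _ => coeffMonomial_X_pow z (e (i, r)).isLt)
  calc gphi (ℓ ^ (n + 1)) z = ∑ k ∈ Icc 1 (ℓ ^ (n + 1)), F k := rfl
    _ = ∑ k ∈ range (ℓ ^ (n + 1)), F k :=
        sum_Icc_one_eq_sum_range <| congrArg (coeffMonomial z) <| by
          simpa using X_pow_add_modByMonic_cyclotomic (R := ℤ) 0 (ℓ ^ (n + 1))
    _ = ∑ j, z j + ∑ r : Fin (ℓ ^ n), (∏ i, z (e (i, r)))⁻¹ := by
        rw [congrArg range hd, sum_range_add, ← Fin.sum_univ_eq_sum_range,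
          ← Fin.sum_univ_eq_sum_range]
        simp only [hF_lt, hF_top]
    _ = _ := by
        rw [← e.sum_comp, Fintype.sum_prod_type, sum_comm, ← sum_add_distrib]
        rfl

end PrimePower

theorem stmt3_general (ℓ : ℕ) (hℓ : ℓ.Prime) (b : ℕ) (hb : 0 < b) :
    gImage (ℓ ^ b) = minkSumPow (H ℓ) (ℓ ^ (b - 1)) := by
  obtain ⟨n, rfl⟩ : ∃ n, b = n + 1 := ⟨b - 1, (Nat.sub_add_cancel hb).symm⟩
  set e := finTotientPrimePowEquiv hℓ n
  rw [Nat.add_sub_cancel]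
  ext w
  constructor
  · rintro ⟨z, hz, rfl⟩
    have hz₀ (j) : z j ≠ 0 := norm_ne_zero_iff.1 (by rw [hz j]; exact one_ne_zero)
    refine ⟨fun r => sumAddInvProd fun i => z (e (i, r)), fun r => ?_,
      (gphi_prime_pow hℓ n z hz₀).symm⟩
    exact (mem_H_iff_exists_sumAddInvProd hℓ.pos).2 ⟨_, fun i => hz _, rfl⟩
  · rintro ⟨f, hf, rfl⟩
    choose v hv hvf using fun r => (mem_H_iff_exists_sumAddInvProd hℓ.pos).1 (hf r)
    have hz₀ (j) : v (e.symm j).2 (e.symm j).1 ≠ 0 :=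
      norm_ne_zero_iff.1 (by rw [hv]; exact one_ne_zero)
    refine ⟨fun j => v (e.symm j).2 (e.symm j).1, fun j => hv _ _, ?_⟩
    simp only [gphi_prime_pow hℓ n _ hz₀, e, Equiv.symm_apply_apply, hvf]

/-- For an odd prime `ℓ` and a positive integer `b`, the image of
`g_{ℓ^b}` on the torus equals the `ℓ^{b-1}`-fold Minkowski sum of `H_ℓ` with itself. -/
theorem stmt3 (ℓ : ℕ) (hℓ : ℓ.Prime) (hodd : Odd ℓ) (b : ℕ) (hb : 0 < b) :
    gImage (ℓ ^ b) = minkSumPow (H ℓ) (ℓ ^ (b - 1)) :=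
  stmt3_general ℓ hℓ b hb
end

section
/- Fix an odd prime ℓ. The scaled Minkowski sums (1/k)·H_ℓ^{⊕k} fill out P_ℓ as k → ∞; that is, (1/k)·H_ℓ^{⊕k} ⊆ P_ℓ for all k ≥ 1, and for every nonempty open subset U of P_ℓ there is K such that k > K implies U ∩ (1/k)·H_ℓ^{⊕k} ≠ ∅. -/
open Finset Pointwise

lemma stmt4_mink_mem {A : Set ℂ} {ι : Type} [Fintype ι] (n : ι → ℕ) (z : ι → ℂ)
    (hz : ∀ i, z i ∈ A) {k : ℕ} (hk : ∑ i, n i = k) :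
    (∑ i, (n i : ℂ) * z i) ∈ minkSumPow A k := by
  have hcard : Fintype.card (Σ i, Fin (n i)) = k := by
    simp [Fintype.card_sigma, hk]
  let e : (Σ i, Fin (n i)) ≃ Fin k := Fintype.equivOfCardEq (by simp [hcard])
  refine ⟨fun j => z (e.symm j).1, fun j => hz _, ?_⟩
  have h1 : ∑ j : Fin k, z (e.symm j).1 = ∑ σ : Σ i, Fin (n i), z σ.1 :=
    Equiv.sum_comp e.symm (fun σ => z σ.1)
  rw [h1, ← Finset.univ_sigma_univ, Finset.sum_sigma]
  simp [mul_comm, Finset.sum_const]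

lemma stmt4_part1 (m : ℕ) (k : ℕ) (hk : 1 ≤ k) :
    scale (1 / (k : ℝ)) (minkSumPow (H m) k) ⊆ Pset m := by
  rintro x ⟨y, ⟨f, hf, rfl⟩, rfl⟩
  have hk0 : (k : ℝ) ≠ 0 := Nat.cast_ne_zero.2 (by omega)
  show ((1 / (k : ℝ) : ℝ) : ℂ) * ∑ i, f i ∈ Pset m
  have : ((1 / (k : ℝ) : ℝ) : ℂ) * ∑ i, f i = ∑ i : Fin k, (1 / (k : ℝ)) • f i := by
    rw [← Complex.real_smul, Finset.smul_sum]
  rw [this]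
  exact (convex_convexHull ℝ (H m)).sum_mem (fun i _ => by positivity)
    (by simp [Finset.sum_const]; field_simp) (fun i _ => subset_convexHull ℝ (H m) (hf i))

lemma stmt4_part2 (m : ℕ) (U : Set ℂ) (hU : IsOpen U) (hne : U.Nonempty) (hsub : U ⊆ Pset m) :
    ∃ K : ℕ, ∀ k > K, (U ∩ scale (1 / (k : ℝ)) (minkSumPow (H m) k)).Nonempty := by
  classical
  obtain ⟨u, hu⟩ := hne
  obtain ⟨ε, hε, hball⟩ := Metric.isOpen_iff.1 hU u hu
  have humem : u ∈ convexHull ℝ (H m) := hsub hu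
  rw [mem_convexHull_iff_exists_fintype] at humem
  obtain ⟨ι, _, w, z, hw0, hw1, hzH, hsum⟩ := humem
  rcases isEmpty_or_nonempty ι with hE | hNE
  · exfalso
    haveI := hE
    rw [Finset.univ_eq_empty, Finset.sum_empty] at hw1
    exact one_ne_zero hw1.symm
  obtain ⟨i₀⟩ := hNE
  set m' : ℕ := Fintype.card ι with hm'
  have hm'pos : 0 < m' := Fintype.card_pos_iff.2 ⟨i₀⟩
  have hm'R : (0:ℝ) < m' := by exact_mod_cast hm'pos
  set C : ℝ := 1 + ∑ i, ‖z i‖ with hC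
  have hCpos : 0 < C := by positivity
  have hzC : ∀ i, ‖z i‖ ≤ C := by
    intro i
    have : ‖z i‖ ≤ ∑ i, ‖z i‖ :=
      Finset.single_le_sum (fun i _ => norm_nonneg _) (Finset.mem_univ i)
    linarith
  refine ⟨⌈m' * m' * C / ε⌉₊, fun k hk => ?_⟩
  have hkpos : 0 < k := lt_of_le_of_lt (Nat.zero_le _) hk
  have hk0 : (k : ℝ) ≠ 0 := Nat.cast_ne_zero.2 (by omega)
  have hkR : 0 < (k : ℝ) := by positivity
  have hkey : m' * m' * C / (k : ℝ) < ε := by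
    have h1 : (⌈(m' : ℝ) * m' * C / ε⌉₊ : ℝ) < k := by exact_mod_cast hk
    have h2 : (m' : ℝ) * m' * C / ε < k := lt_of_le_of_lt (Nat.le_ceil _) h1
    rw [div_lt_iff₀ hkR]
    rw [div_lt_iff₀ hε] at h2
    linarith
  set S : ℕ := ∑ i ∈ Finset.univ.erase i₀, ⌊w i * k⌋₊ with hS
  have hSreal : ((S : ℝ)) = ∑ i ∈ Finset.univ.erase i₀, (⌊w i * k⌋₊ : ℝ) := by
    rw [hS]; push_cast; rfl
  have hfl : ∀ i, (⌊w i * k⌋₊ : ℝ) ≤ w i * k := fun i =>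
    Nat.floor_le (mul_nonneg (hw0 i) hkR.le)
  have hfl2 : ∀ i, w i * k < (⌊w i * k⌋₊ : ℝ) + 1 := fun i => Nat.lt_floor_add_one _
  have hsplit : ∑ i ∈ Finset.univ.erase i₀, (w i * k) = (1 - w i₀) * k := by
    rw [← Finset.sum_mul]
    congr 1
    rw [← hw1, ← Finset.add_sum_erase _ _ (Finset.mem_univ i₀)]
    ring
  have hSk : (S : ℝ) ≤ k := by
    have h1 : (S : ℝ) ≤ ∑ i ∈ Finset.univ.erase i₀, w i * k := by
      rw [hSreal]; exact Finset.sum_le_sum fun i _ => hfl i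
    rw [hsplit] at h1
    nlinarith [hw0 i₀]
  have hSkn : S ≤ k := by exact_mod_cast hSk
  set n : ι → ℕ := fun i => if i = i₀ then k - S else ⌊w i * k⌋₊ with hn
  have hnsum : ∑ i, n i = k := by
    rw [← Finset.add_sum_erase _ _ (Finset.mem_univ i₀)]
    have h2 : ∑ i ∈ Finset.univ.erase i₀, n i = S := by
      refine Finset.sum_congr rfl fun i hi => ?_
      simp [hn, (Finset.mem_erase.1 hi).1]
    rw [h2]
    simp only [hn, if_pos rfl]
    omega
  have herr : ∀ i, |(n i : ℝ) / k - w i| ≤ m' / k := by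
    intro i
    by_cases hi : i = i₀
    · rw [hi]
      have hni : (n i₀ : ℝ) = (k : ℝ) - S := by
        simp only [hn, if_pos rfl]
        rw [Nat.cast_sub hSkn]
      have hdiff : (n i₀ : ℝ) / k - w i₀ =
          (∑ i ∈ Finset.univ.erase i₀, (w i * k - (⌊w i * k⌋₊ : ℝ))) / k := by
        rw [hni, Finset.sum_sub_distrib, hsplit, ← hSreal]
        field_simp
        ring
      rw [hdiff, abs_div, abs_of_nonneg hkR.le]
      gcongr
      calc |∑ i ∈ Finset.univ.erase i₀, (w i * k - (⌊w i * k⌋₊ : ℝ))|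
          ≤ ∑ i ∈ Finset.univ.erase i₀, |w i * k - (⌊w i * k⌋₊ : ℝ)| :=
            Finset.abs_sum_le_sum_abs _ _
        _ ≤ ∑ _i ∈ Finset.univ.erase i₀, (1 : ℝ) := by
            refine Finset.sum_le_sum fun i _ => ?_
            rw [abs_of_nonneg (by linarith [hfl i])]
            linarith [hfl2 i]
        _ ≤ m' := by
            rw [Finset.sum_const, nsmul_eq_mul, mul_one]
            have h3 : (Finset.univ.erase i₀).card ≤ m' := by
              simpa [hm'] using Finset.card_erase_le (a := i₀) (s := (Finset.univ : Finset ι))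
            exact_mod_cast h3
    · have hni : (n i : ℝ) = (⌊w i * k⌋₊ : ℝ) := by simp [hn, hi]
      have heq : (n i : ℝ) / k - w i = ((⌊w i * k⌋₊ : ℝ) - w i * k) / k := by
        rw [hni]; field_simp
      rw [heq, abs_div, abs_of_nonneg hkR.le]
      gcongr
      have h1 : (1:ℝ) ≤ m' := by exact_mod_cast hm'pos
      rw [abs_le]
      constructor <;> nlinarith [hfl i, hfl2 i]
  set p : ℂ := ((1 / (k : ℝ) : ℝ) : ℂ) * ∑ i, (n i : ℂ) * z i with hp
  have hpmem : p ∈ scale (1 / (k : ℝ)) (minkSumPow (H m) k) :=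
    ⟨∑ i, (n i : ℂ) * z i, stmt4_mink_mem n z hzH hnsum, rfl⟩
  have hpU : p ∈ U := by
    apply hball
    rw [Metric.mem_ball, dist_eq_norm]
    have hpe : p - u = ∑ i, ((n i : ℝ) / k - w i) • z i := by
      rw [hp, ← hsum, Finset.mul_sum, ← Finset.sum_sub_distrib]
      refine Finset.sum_congr rfl fun i _ => ?_
      rw [sub_smul]
      simp only [Complex.real_smul]
      push_cast
      ring
    rw [hpe]
    calc ‖∑ i, ((n i : ℝ) / k - w i) • z i‖
        ≤ ∑ i, ‖((n i : ℝ) / k - w i) • z i‖ := norm_sum_le _ _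
      _ ≤ ∑ _i : ι, ((m' : ℝ) / k) * C := by
          refine Finset.sum_le_sum fun i _ => ?_
          rw [norm_smul, Real.norm_eq_abs]
          exact mul_le_mul (herr i) (hzC i) (norm_nonneg _) (by positivity)
      _ = (m' : ℝ) * m' * C / k := by
          rw [Finset.sum_const, nsmul_eq_mul, Finset.card_univ, ← hm']
          field_simp
      _ < ε := hkey
  exact ⟨p, hpU, hpmem⟩

/-- For an odd prime `ℓ`, the scaled Minkowski sums `(1/k)·H_ℓ^{⊕k}`
fill out `P_ℓ` as `k → ∞`. -/
theorem stmt4 (ℓ : ℕ) (hℓ : ℓ.Prime) (hodd : Odd ℓ) :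
    (∀ k : ℕ, 1 ≤ k → scale (1 / (k : ℝ)) (minkSumPow (H ℓ) k) ⊆ Pset ℓ) ∧
    ∀ U : Set ℂ, IsOpen U → U.Nonempty → U ⊆ Pset ℓ →
      ∃ K : ℕ, ∀ k > K, (U ∩ scale (1 / (k : ℝ)) (minkSumPow (H ℓ) k)).Nonempty :=
  ⟨fun k hk => stmt4_part1 ℓ k hk, fun U hU hne hsub => stmt4_part2 ℓ U hU hne hsub⟩
end

section
/- Let p be an odd prime, n a positive integer, and σ_ω a cyclic supercharacter modulo pn, where ω is a unit modulo pn with reductions ω_p modulo p and ω_n modulo n. Suppose ord(ω_n) = uv with gcd(v, ord(ω_p)) = 1, that u is even and v is odd, that ω_n^{uv/2} = −1 in ℤ/nℤ, and that ord(ω_p) = (p − 1)/r for a positive integer r. Let t be an integer coprime to p and s any integer. If p ≡ 1 (mod 2ru), then σ_ω(sp + tn) = (2/(ru))·Σ_{j=1}^{u/2} [ (g_{ru/2}(ω^j t) − 1)·Re(σ_{ω_n^u}(ω^j s)) + i·(g_{ru}(ω^j t) − g_{ru/2}(ω^j t))·Im(σ_{ω_n^u}(ω^j s)) ], where the arguments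 ω^j t of the Gauss sums are taken modulo p and σ_{ω_n^u} is the cyclic supercharacter modulo n attached to ω_n^u. -/
open Finset Pointwise

/-!
Reducing modulo `p` and `n`, `σ_ω(sp + tn) = ∑_j e(ω_p^j t / p) e(ω_n^j s / n)`, a sum over
`j < ord ω = u w v`, where `ord ω_p = u w`, `ord ω_n = u v` and `gcd(w, v) = 1`. Grouping `j` by
its residue `i` modulo `u`, the sum factors as `∑_{i<u} η_i S_i` with the Gaussian periods
`η_i = σ_{ω_p^u}(ω_p^i t)` and `S_i = σ_{ω_n^u}(ω_n^i s)`. In the cyclic group `(ℤ/pℤ)ˣ` the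
`k`-th powers form the subgroup of order `(p-1)/k`, which is generated by any element of that
order, so `g_{ru} = 1 + r u η_i` and `g_{ru/2} = 1 + (r u / 2)(η_i + η_{i+u/2})`. Finally
`ω_n^{uv/2} = -1` gives `S_{i+u/2} = conj S_i`, and pairing `i` with `i + u/2` yields the formula.
-/

open Function

theorem Finset.sum_range_mul_eq_sum_sum {M : Type*} [AddCommMonoid M] (a b : ℕ) (f : ℕ → M) :
    ∑ i ∈ range (a * b), f i = ∑ x ∈ range a, ∑ y ∈ range b, f (x + a * y) := by
  rw [mul_comm a b, Finset.sum_range, ← finProdFinEquiv.sum_comp, Fintype.sum_prod_type,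
    Finset.sum_comm]
  simp only [Finset.sum_range, finProdFinEquiv_apply_val]

namespace Function.Periodic

variable {M : Type*} [AddCommMonoid M] {f : ℕ → M} {c : ℕ}

theorem sum_range_add (hf : Periodic f c) (m : ℕ) :
    ∑ y ∈ range c, f (m + y) = ∑ y ∈ range c, f y := by
  have hIco := Finset.sum_Ico_eq_sum_range f m (m + c)
  rw [Nat.add_sub_cancel_left] at hIco
  rw [← hIco, ← Finset.sum_congr rfl fun k _ => hf.map_mod_nat k, Finset.sum_eq_multiset_sum,
    Finset.sum_eq_multiset_sum, Finset.range_val, ← Nat.multiset_Ico_map_mod m c,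
    Multiset.map_map]
  rfl

theorem sum_Icc_one_eq_sum_range (hf : Periodic f c) :
    ∑ i ∈ Icc 1 c, f i = ∑ i ∈ range c, f i := by
  rw [← Finset.Ico_add_one_right_eq_Icc, Finset.sum_Ico_eq_sum_range, Nat.add_sub_cancel,
    hf.sum_range_add]

theorem sum_range_mul_left_of_coprime (hf : Periodic f c) {a : ℕ} (ha : a.Coprime c) :
    ∑ y ∈ range c, f (a * y) = ∑ y ∈ range c, f y := by
  have hinj : Set.InjOn (fun y => a * y % c) (range c) := fun x hx y hy hxy =>
    Nat.ModEq.eq_of_lt_of_lt (Nat.ModEq.cancel_left_of_coprime ha.symm hxy)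
      (by simpa using hx) (by simpa using hy)
  have himage : (range c).image (fun y => a * y % c) = range c := by
    refine Finset.eq_of_subset_of_card_le (fun z hz => ?_) (Finset.card_image_of_injOn hinj).ge
    obtain ⟨y, hy, rfl⟩ := Finset.mem_image.mp hz
    exact Finset.mem_range.mpr (Nat.mod_lt _ (Nat.pos_of_ne_zero (by rintro rfl; simp at hy)))
  rw [← Finset.sum_congr rfl fun y _ => hf.map_mod_nat (a * y), ← Finset.sum_image hinj, himage]

theorem sum_range_mul (hf : Periodic f c) (k : ℕ) :
    ∑ i ∈ range (c * k), f i = k • ∑ i ∈ range c, f i := by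
  rw [Finset.sum_range_mul_eq_sum_sum, Finset.smul_sum]
  refine Finset.sum_congr rfl fun x _ => ?_
  rw [Finset.sum_congr rfl fun y _ => (by rw [mul_comm]; exact hf.nat_mul y x :
    f (x + c * y) = f x), Finset.sum_const, Finset.card_range]

theorem sum_range_two_mul {h : ℕ} (hf : Periodic f (2 * h)) :
    ∑ i ∈ range (2 * h), f i = ∑ i ∈ Icc 1 h, (f i + f (i + h)) := by
  rw [← hf.sum_range_add 1, two_mul, Finset.sum_range_add, ← Finset.sum_add_distrib,
    ← Finset.Ico_add_one_right_eq_Icc, Finset.sum_Ico_eq_sum_range, Nat.add_sub_cancel]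
  refine Finset.sum_congr rfl fun i _ => ?_
  ring_nf

end Function.Periodic

theorem sum_range_mul_mul_eq_sum_mul_sum_of_periodic {R : Type*} [CommSemiring R] {a b : ℕ → R}
    {u w v : ℕ} (ha : Periodic a (u * w)) (hb : Periodic b (u * v)) (hwv : w.Coprime v) :
    ∑ j ∈ range (u * w * v), a j * b j =
      ∑ i ∈ range u, (∑ m ∈ range w, a (i + u * m)) * ∑ k ∈ range v, b (i + u * k) := by
  have hb_slice : ∀ x, Periodic (fun k => b (x + u * k)) v := fun x k => by
    simpa [mul_add, add_assoc] using hb (x + u * k)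
  have hB : Periodic (fun x => ∑ k ∈ range v, b (x + u * k)) u := fun x => by
    simpa [mul_add, add_assoc] using (hb_slice x).sum_range_add 1
  calc ∑ j ∈ range (u * w * v), a j * b j
      = ∑ x ∈ range (u * w), a x * ∑ k ∈ range v, b (x + u * k) := by
        rw [Finset.sum_range_mul_eq_sum_sum]
        refine Finset.sum_congr rfl fun x _ => ?_
        rw [← (hb_slice x).sum_range_mul_left_of_coprime hwv, Finset.mul_sum]
        refine Finset.sum_congr rfl fun y _ => ?_
        have hax : a (x + y * (u * w)) = a x := ha.nat_mul y x
        rw [show x + u * w * y = x + y * (u * w) by ring, hax]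
        ring_nf
    _ = _ := by
        rw [Finset.sum_range_mul_eq_sum_sum]
        refine Finset.sum_congr rfl fun i _ => ?_
        rw [Finset.sum_mul]
        refine Finset.sum_congr rfl fun m _ => ?_
        rw [show i + u * m = i + m * u by ring]
        exact congrArg (a (i + m * u) * ·) (hB.nat_mul m i)

section OrbitSums

variable {G M : Type*} [Group G] [AddCommMonoid M]

theorem periodic_pow_orderOf {α : Type*} (g : G) (F : G → α) :
    Periodic (fun j => F (g ^ j)) (orderOf g) := fun j => by
  simp [pow_add, pow_orderOf_eq_one]

theorem sum_range_orderOf_pow_eq_of_zpowers_eq [Finite G] {g h : G}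
    (hgh : Subgroup.zpowers g = Subgroup.zpowers h) (F : G → M) :
    ∑ i ∈ range (orderOf g), F (g ^ i) = ∑ i ∈ range (orderOf h), F (h ^ i) := by
  classical
  have himage : (range (orderOf g)).image (g ^ ·) = (range (orderOf h)).image (h ^ ·) := by
    ext z
    rw [← mem_zpowers_iff_mem_range_orderOf, ← mem_zpowers_iff_mem_range_orderOf, hgh]
  rw [← Finset.sum_image (by simpa using pow_injOn_Iio_orderOf (x := g)), himage,
    Finset.sum_image (by simpa using pow_injOn_Iio_orderOf (x := h))]

theorem sum_range_orderOf_pow_eq_sum_univ [Fintype G] {g : G}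
    (hg : ∀ x, x ∈ Subgroup.zpowers g) (F : G → M) :
    ∑ i ∈ range (orderOf g), F (g ^ i) = ∑ x, F x := by
  classical
  rw [← Finset.sum_image (by simpa using pow_injOn_Iio_orderOf (x := g)),
    IsCyclic.image_range_orderOf hg]

end OrbitSums

theorem sum_units_pow_eq_nsmul_sum_range {R M : Type*} [CommRing R] [IsDomain R] [Fintype Rˣ]
    [AddCommMonoid M] (F : Rˣ → M) {k : ℕ} (hk : k ∣ Fintype.card Rˣ) {h : Rˣ}
    (hh : orderOf h = Fintype.card Rˣ / k) :
    ∑ x : Rˣ, F (x ^ k) = k • ∑ i ∈ range (orderOf h), F (h ^ i) := by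
  obtain ⟨g, hg⟩ := IsCyclic.exists_generator (α := Rˣ)
  have hk0 : k ≠ 0 := by rintro rfl; simp at hk
  have hg_card : orderOf g = Fintype.card Rˣ := by
    rw [orderOf_eq_card_of_forall_mem_zpowers hg, Nat.card_eq_fintype_card]
  have hgk : orderOf (g ^ k) = orderOf h := by
    rw [orderOf_pow_of_dvd hk0 (hg_card ▸ hk), hh, hg_card]
  have : NeZero (orderOf h) := ⟨(orderOf_pos h).ne'⟩
  have hzpowers : Subgroup.zpowers (g ^ k) = Subgroup.zpowers h := by
    have hprim : IsPrimitiveRoot (g ^ k) (orderOf h) := hgk ▸ IsPrimitiveRoot.orderOf (g ^ k)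
    rw [hprim.zpowers_eq, (IsPrimitiveRoot.orderOf h).zpowers_eq]
  calc ∑ x : Rˣ, F (x ^ k)
      = ∑ i ∈ range (orderOf h * k), F ((g ^ k) ^ i) := by
        rw [hh, Nat.div_mul_cancel hk, ← hg_card, ← sum_range_orderOf_pow_eq_sum_univ hg]
        simp only [← pow_mul, mul_comm]
    _ = k • ∑ i ∈ range (orderOf h), F ((g ^ k) ^ i) := by
        rw [← hgk]
        exact (periodic_pow_orderOf (g ^ k) F).sum_range_mul k
    _ = k • ∑ i ∈ range (orderOf h), F (h ^ i) := by
        rw [← sum_range_orderOf_pow_eq_of_zpowers_eq hzpowers, hgk]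

section Characters

open ZMod

theorem e2_val_div_eq_stdAddChar (N : ℕ) [NeZero N] (x : ZMod N) :
    e2 ((x.val : ℝ) / N) = stdAddChar x := by
  rw [e2, stdAddChar_apply, toCircle_apply]
  push_cast
  ring_nf

theorem stdAddChar_intCast_mul_of_mul_eq {N d e : ℕ} [NeZero N] [NeZero d] (h : d * e = N)
    (k : ℤ) : stdAddChar ((k * e : ℤ) : ZMod N) = stdAddChar (k : ZMod d) := by
  subst h
  have he : (e : ℂ) ≠ 0 := Nat.cast_ne_zero.mpr (right_ne_zero_of_mul (NeZero.ne (d * e)))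
  rw [stdAddChar_coe, stdAddChar_coe]
  push_cast
  field_simp

theorem stdAddChar_mul_intCast_mul_add_mul {p n : ℕ} [NeZero p] [NeZero n] (x : ZMod (p * n))
    (s t : ℤ) :
    stdAddChar (x * ((s * p + t * n : ℤ) : ZMod (p * n))) =
      stdAddChar (x.cast * (t : ZMod p)) * stdAddChar (x.cast * (s : ZMod n)) := by
  obtain ⟨c, rfl⟩ := ZMod.intCast_surjective x
  rw [cast_intCast (dvd_mul_right p n), cast_intCast (dvd_mul_left n p), ← Int.cast_mul,
    show c * (s * p + t * n) = c * t * n + c * s * p by ring, Int.cast_add,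
    AddChar.map_add_eq_mul, stdAddChar_intCast_mul_of_mul_eq rfl,
    stdAddChar_intCast_mul_of_mul_eq (mul_comm n p)]
  push_cast
  rfl

variable {N : ℕ} [NeZero N]

theorem cyclicSuperchar_eq_sum_range (χ : (ZMod N)ˣ) (y : ZMod N) :
    cyclicSuperchar N χ y =
      ∑ j ∈ range (orderOf χ), stdAddChar (((χ ^ j : (ZMod N)ˣ) : ZMod N) * y) := by
  simp only [cyclicSuperchar, e2_val_div_eq_stdAddChar]
  exact (periodic_pow_orderOf χ fun x => stdAddChar ((x : ZMod N) * y)).sum_Icc_one_eq_sum_range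

theorem cyclicSuperchar_units_mul (χ : (ZMod N)ˣ) (y : ZMod N) :
    cyclicSuperchar N χ (χ * y) = cyclicSuperchar N χ y := by
  simp only [cyclicSuperchar_eq_sum_range]
  rw [← (periodic_pow_orderOf χ fun x => stdAddChar ((x : ZMod N) * y)).sum_range_add 1]
  simp [pow_add, mul_assoc, mul_comm]

theorem cyclicSuperchar_neg (χ : (ZMod N)ˣ) (y : ZMod N) :
    cyclicSuperchar N χ (-y) = starRingEnd ℂ (cyclicSuperchar N χ y) := by
  simp only [cyclicSuperchar_eq_sum_range, map_sum, mul_neg, AddChar.map_neg_eq_conj]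

theorem cyclicSuperchar_eq_sum_pow {χ : (ZMod N)ˣ} {k : ℕ} (hk : k ∣ orderOf χ)
    (y : ZMod N) :
    cyclicSuperchar N χ y =
      ∑ i ∈ range k, cyclicSuperchar N (χ ^ k) ((χ : ZMod N) ^ i * y) := by
  have hk0 : k ≠ 0 := by rintro rfl; simp [(orderOf_pos χ).ne'] at hk
  rw [cyclicSuperchar_eq_sum_range, ← Nat.mul_div_cancel' hk, Finset.sum_range_mul_eq_sum_sum]
  refine Finset.sum_congr rfl fun i _ => ?_
  rw [cyclicSuperchar_eq_sum_range, orderOf_pow_of_dvd hk0 hk]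
  refine Finset.sum_congr rfl fun j _ => ?_
  push_cast
  ring_nf

theorem periodic_cyclicSuperchar_pow (χ : (ZMod N)ˣ) (u : ℕ) (y : ZMod N) :
    Periodic (fun i => cyclicSuperchar N (χ ^ u) ((χ : ZMod N) ^ i * y)) u := fun i => by
  simpa [pow_add, mul_assoc, mul_left_comm] using
    cyclicSuperchar_units_mul (χ ^ u) ((χ : ZMod N) ^ i * y)

theorem cyclicSuperchar_pow_two_mul_pow_add_eq_conj (χ : (ZMod N)ˣ) {h v : ℕ} (hv : Odd v)
    (hneg : (χ : ZMod N) ^ (h * v) = -1) (i : ℕ) (y : ZMod N) :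
    cyclicSuperchar N (χ ^ (2 * h)) ((χ : ZMod N) ^ (i + h) * y) =
      starRingEnd ℂ (cyclicSuperchar N (χ ^ (2 * h)) ((χ : ZMod N) ^ i * y)) := by
  obtain ⟨c, rfl⟩ := hv
  have hshift : cyclicSuperchar N (χ ^ (2 * h)) ((χ : ZMod N) ^ (i + h + c * (2 * h)) * y) =
      cyclicSuperchar N (χ ^ (2 * h)) ((χ : ZMod N) ^ (i + h) * y) :=
    (periodic_cyclicSuperchar_pow χ (2 * h) y).nat_mul c (i + h)
  rw [← hshift, ← cyclicSuperchar_neg, show i + h + c * (2 * h) = h * (2 * c + 1) + i by ring,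
    pow_add, hneg]
  ring_nf

end Characters

section Reduction

open ZMod

theorem ZMod.orderOf_units_eq_lcm {m n : ℕ} (h : m.Coprime n) (ω : (ZMod (m * n))ˣ) :
    orderOf ω = (orderOf (unitsMap (dvd_mul_right m n) ω)).lcm
      (orderOf (unitsMap (dvd_mul_left n m) ω)) := by
  let e : (ZMod (m * n))ˣ ≃* (ZMod m)ˣ × (ZMod n)ˣ :=
    (Units.mapEquiv (chineseRemainder h).toMulEquiv).trans MulEquiv.prodUnits
  rw [← MulEquiv.orderOf_eq e ω, Prod.orderOf]
  congr 2 <;> ext <;> simp [e, chineseRemainder, unitsMap_val, MulEquiv.prodUnits]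

theorem ZMod.orderOf_unitsMap_dvd_of_dvd {p n : ℕ} (h : p ∣ n) (ω : (ZMod (p * n))ˣ) :
    orderOf (unitsMap (dvd_mul_right p n) ω) ∣ orderOf (unitsMap (dvd_mul_left n p) ω) := by
  have hcomp : unitsMap (dvd_mul_right p n) ω = unitsMap h (unitsMap (dvd_mul_left n p) ω) := by
    rw [← MonoidHom.comp_apply, unitsMap_comp]
  rw [hcomp]
  exact orderOf_map_dvd _ _

theorem ZMod.coprime_of_not_orderOf_unitsMap_dvd {p n : ℕ} (hp : p.Prime) (ω : (ZMod (p * n))ˣ)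
    (h : ¬orderOf (unitsMap (dvd_mul_right p n) ω) ∣ orderOf (unitsMap (dvd_mul_left n p) ω)) :
    p.Coprime n :=
  (Nat.coprime_or_dvd_of_prime hp n).resolve_right fun hdvd =>
    h (orderOf_unitsMap_dvd_of_dvd hdvd ω)

variable {p n : ℕ} [NeZero p] [NeZero n]

theorem cyclicSuperchar_intCast_mul_add_mul (ω : (ZMod (p * n))ˣ) (s t : ℤ) :
    cyclicSuperchar (p * n) ω ((s * p + t * n : ℤ) : ZMod (p * n)) =
      ∑ j ∈ range (orderOf ω),
        stdAddChar ((unitsMap (dvd_mul_right p n) ω : ZMod p) ^ j * (t : ZMod p)) *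
          stdAddChar ((unitsMap (dvd_mul_left n p) ω : ZMod n) ^ j * (s : ZMod n)) := by
  rw [cyclicSuperchar_eq_sum_range]
  refine Finset.sum_congr rfl fun j _ => ?_
  rw [stdAddChar_mul_intCast_mul_add_mul, ← Units.val_pow_eq_pow_val,
    ← Units.val_pow_eq_pow_val, ← map_pow, ← map_pow, unitsMap_val, unitsMap_val]

theorem cyclicSuperchar_intCast_mul_add_mul_eq_sum_mul (hpn : p.Coprime n)
    (ω : (ZMod (p * n))ˣ) {ωp : (ZMod p)ˣ} {ωn : (ZMod n)ˣ}
    (hωp : unitsMap (dvd_mul_right p n) ω = ωp) (hωn : unitsMap (dvd_mul_left n p) ω = ωn)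
    {u w v : ℕ} (hp : orderOf ωp = u * w) (hn : orderOf ωn = u * v) (hwv : w.Coprime v)
    (s t : ℤ) :
    cyclicSuperchar (p * n) ω ((s * p + t * n : ℤ) : ZMod (p * n)) =
      ∑ i ∈ range u, cyclicSuperchar p (ωp ^ u) ((ωp : ZMod p) ^ i * (t : ZMod p)) *
        cyclicSuperchar n (ωn ^ u) ((ωn : ZMod n) ^ i * (s : ZMod n)) := by
  subst hωp hωn
  have hu : u ≠ 0 := by rintro rfl; simp [(orderOf_pos _).ne'] at hp
  have ha := hp ▸ periodic_pow_orderOf _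
    fun x : (ZMod p)ˣ => stdAddChar ((x : ZMod p) * (t : ZMod p))
  have hb := hn ▸ periodic_pow_orderOf _
    fun x : (ZMod n)ˣ => stdAddChar ((x : ZMod n) * (s : ZMod n))
  simp only [Units.val_pow_eq_pow_val] at ha hb
  rw [cyclicSuperchar_intCast_mul_add_mul, orderOf_units_eq_lcm hpn, hp, hn, Nat.lcm_mul_left,
    hwv.lcm_eq_mul, ← mul_assoc, sum_range_mul_mul_eq_sum_mul_sum_of_periodic ha hb hwv]
  refine Finset.sum_congr rfl fun i _ => ?_
  rw [cyclicSuperchar_eq_sum_range, cyclicSuperchar_eq_sum_range, orderOf_pow_of_dvd hu ⟨w, hp⟩,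
    orderOf_pow_of_dvd hu ⟨v, hn⟩, hp, hn, Nat.mul_div_cancel_left _ (Nat.pos_of_ne_zero hu),
    Nat.mul_div_cancel_left _ (Nat.pos_of_ne_zero hu)]
  congr 1 <;> refine Finset.sum_congr rfl fun m _ => ?_ <;> push_cast <;> ring_nf

end Reduction

section GaussSums

theorem ZMod.sum_range_natCast {M : Type*} [AddCommMonoid M] (N : ℕ) [NeZero N]
    (F : ZMod N → M) : ∑ i ∈ range N, F i = ∑ x, F x :=
  Finset.sum_nbij' (↑) ZMod.val (by simp) (by simp [ZMod.val_lt])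
    (fun i hi => ZMod.val_cast_of_lt (by simpa using hi)) (fun x _ => ZMod.natCast_zmod_val x)
    (fun _ _ => rfl)

theorem Fintype.sum_eq_add_sum_units {K M : Type*} [GroupWithZero K] [Fintype K] [DecidableEq K]
    [AddCommMonoid M] (F : K → M) : ∑ x, F x = F 0 + ∑ x : Kˣ, F x := by
  rw [Fintype.sum_eq_add_sum_compl 0, Finset.sum_subtype (p := (· ≠ 0)) _ (fun x => by simp)]
  exact congrArg _ (Fintype.sum_equiv unitsEquivNeZero.symm _ _ fun _ => rfl)

open ZMod

variable {p : ℕ} [Fact p.Prime]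

theorem gaussG_eq_one_add_mul_cyclicSuperchar {k : ℕ} (hk : k ∣ p - 1) {h : (ZMod p)ˣ}
    (hh : orderOf h = (p - 1) / k) (τ : ZMod p) :
    gaussG p k τ = 1 + k * cyclicSuperchar p h τ := by
  have hk0 : k ≠ 0 := by
    rintro rfl
    have := (Fact.out : p.Prime).two_le
    simp at hk
    omega
  have hperiodic : Periodic (fun j : ℕ => stdAddChar (τ * (j : ZMod p) ^ k)) p := fun j => by
    simp
  have hunits := sum_units_pow_eq_nsmul_sum_range (fun x => stdAddChar (τ * (x : ZMod p)))
    (k := k) (by rwa [ZMod.card_units]) (h := h) (by rwa [ZMod.card_units])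
  simp only [Units.val_pow_eq_pow_val] at hunits
  simp only [gaussG, e2_val_div_eq_stdAddChar]
  rw [hperiodic.sum_Icc_one_eq_sum_range,
    ZMod.sum_range_natCast p (fun x => stdAddChar (τ * x ^ k)), Fintype.sum_eq_add_sum_units,
    zero_pow hk0, mul_zero, AddChar.map_zero_eq_one, hunits, cyclicSuperchar_eq_sum_range,
    nsmul_eq_mul]
  simp [mul_comm]

theorem gaussG_mul_eq_one_add_mul_cyclicSuperchar_pow {χ : (ZMod p)ˣ} {r d : ℕ}
    (hχ : orderOf χ * r = p - 1) (hd : d ∣ orderOf χ) (τ : ZMod p) :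
    gaussG p (r * d) τ = 1 + ↑(r * d) * cyclicSuperchar p (χ ^ d) τ := by
  obtain ⟨e, he⟩ := hd
  have hd0 : d ≠ 0 := by rintro rfl; simp [(orderOf_pos χ).ne'] at he
  have hr0 : r ≠ 0 := by rintro rfl; have := (Fact.out : p.Prime).two_le; omega
  refine gaussG_eq_one_add_mul_cyclicSuperchar ⟨e, by rw [← hχ, he]; ring⟩ ?_ τ
  rw [orderOf_pow_of_dvd hd0 ⟨e, he⟩, ← hχ, he,
    Nat.mul_div_cancel_left _ (Nat.pos_of_ne_zero hd0), show d * e * r = r * d * e by ring,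
    Nat.mul_div_cancel_left _ (by positivity)]

theorem Complex.mul_add_mul_conj (a b z : ℂ) :
    a * z + b * starRingEnd ℂ z = (a + b) * z.re + Complex.I * (a - b) * z.im := by
  conv_lhs => rw [← Complex.re_add_im z]
  simp only [map_add, map_mul, Complex.conj_ofReal, Complex.conj_I]
  ring

theorem cyclicSuperchar_mul_add_mul_conj_eq_gaussG {χ : (ZMod p)ˣ} {r h : ℕ} (hh : h ≠ 0)
    (hχ : orderOf χ * r = p - 1) (h2h : 2 * h ∣ orderOf χ) (τ : ZMod p) (S : ℂ) :
    cyclicSuperchar p (χ ^ (2 * h)) τ * S +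
        cyclicSuperchar p (χ ^ (2 * h)) ((χ : ZMod p) ^ h * τ) * starRingEnd ℂ S =
      2 / ((r : ℂ) * ↑(2 * h)) * ((gaussG p (r * h) τ - 1) * S.re +
        Complex.I * (gaussG p (r * (2 * h)) τ - gaussG p (r * h) τ) * S.im) := by
  have hr0 : r ≠ 0 := by rintro rfl; have := (Fact.out : p.Prime).two_le; omega
  have hhalf : cyclicSuperchar p (χ ^ h) τ = cyclicSuperchar p (χ ^ (2 * h)) τ +
      cyclicSuperchar p (χ ^ (2 * h)) ((χ : ZMod p) ^ h * τ) := by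
    rw [cyclicSuperchar_eq_sum_pow (k := 2) (by
      rw [orderOf_pow_of_dvd hh (dvd_trans (dvd_mul_left h 2) h2h)]
      exact Nat.dvd_div_of_mul_dvd (by rwa [mul_comm]))]
    simp [Finset.sum_range_succ, ← pow_mul, mul_comm]
  rw [gaussG_mul_eq_one_add_mul_cyclicSuperchar_pow hχ h2h,
    gaussG_mul_eq_one_add_mul_cyclicSuperchar_pow hχ (dvd_trans (dvd_mul_left h 2) h2h), hhalf,
    Complex.mul_add_mul_conj]
  generalize cyclicSuperchar p (χ ^ (2 * h)) τ = η₁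
  generalize cyclicSuperchar p (χ ^ (2 * h)) ((χ : ZMod p) ^ h * τ) = η₂
  have : (r : ℂ) ≠ 0 := by exact_mod_cast hr0
  have : (h : ℂ) ≠ 0 := by exact_mod_cast hh
  push_cast
  field_simp
  ring

end GaussSums

theorem stmt16_general (p n : ℕ) (hp : p.Prime) (hn : 0 < n)
    (ω : (ZMod (p * n))ˣ)
    (ωp : (ZMod p)ˣ) (hωp : ωp = ZMod.unitsMap (dvd_mul_right p n) ω)
    (ωn : (ZMod n)ˣ) (hωn : ωn = ZMod.unitsMap (dvd_mul_left n p) ω)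
    (u v : ℕ) (hord : orderOf ωn = u * v) (hcop : Nat.Coprime v (orderOf ωp))
    (hu : Even u) (hv : Odd v)
    (hneg : (ωn : ZMod n) ^ (u * v / 2) = -1)
    (r : ℕ) (hr : 0 < r) (hordp : orderOf ωp = (p - 1) / r)
    (t : ℤ) (s : ℤ)
    (hmod : p ≡ 1 [MOD 2 * r * u]) :
    cyclicSuperchar (p * n) ω ((s * p + t * n : ℤ) : ZMod (p * n)) =
      (2 / ((r : ℂ) * u)) * ∑ j ∈ Finset.Icc 1 (u / 2),
        ((gaussG p (r * u / 2) ((ωp : ZMod p) ^ j * (t : ZMod p)) - 1) *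
            ((cyclicSuperchar n (ωn ^ u) ((ωn : ZMod n) ^ j * (s : ZMod n))).re : ℂ) +
          Complex.I *
            (gaussG p (r * u) ((ωp : ZMod p) ^ j * (t : ZMod p)) -
              gaussG p (r * u / 2) ((ωp : ZMod p) ^ j * (t : ZMod p))) *
            ((cyclicSuperchar n (ωn ^ u) ((ωn : ZMod n) ^ j * (s : ZMod n))).im : ℂ)) := by
  have : Fact p.Prime := ⟨hp⟩
  have : NeZero n := ⟨hn.ne'⟩
  obtain ⟨h, rfl⟩ : ∃ h, u = 2 * h := ⟨u / 2, by obtain ⟨k, rfl⟩ := hu; omega⟩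
  obtain ⟨m, hm⟩ := (Nat.modEq_iff_dvd' hp.one_lt.le).mp hmod.symm
  have hh : h ≠ 0 := by rintro rfl; simp [(orderOf_pos ωn).ne'] at hord
  have hordp' : orderOf ωp = 2 * h * (2 * m) := by
    rw [hordp, hm, show 2 * r * (2 * h) * m = r * (2 * h * (2 * m)) by ring,
      Nat.mul_div_cancel_left _ hr]
  have hχ : orderOf ωp * r = p - 1 := by rw [hordp', hm]; ring
  have hpn : p.Coprime n := by
    subst hωp hωn
    refine ZMod.coprime_of_not_orderOf_unitsMap_dvd hp ω fun hdvd => ?_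
    have hdvd' : 2 * h * (2 * m) ∣ 2 * h * 1 := by
      rw [← hordp', mul_one]
      exact hcop.symm.dvd_of_dvd_mul_right (hord ▸ hdvd)
    have := Nat.dvd_one.mp (Nat.dvd_of_mul_dvd_mul_left (by positivity) hdvd')
    omega
  have hneg' : (ωn : ZMod n) ^ (h * v) = -1 := by
    rwa [mul_assoc, Nat.mul_div_cancel_left _ two_pos] at hneg
  have hwv : (2 * m).Coprime v := (hcop.coprime_dvd_right ⟨2 * h, by rw [hordp']; ring⟩).symm
  have hperiodic : Periodic (fun i => cyclicSuperchar p (ωp ^ (2 * h)) ((ωp : ZMod p) ^ i * t) *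
      cyclicSuperchar n (ωn ^ (2 * h)) ((ωn : ZMod n) ^ i * s)) (2 * h) :=
    (periodic_cyclicSuperchar_pow ωp _ _).mul (periodic_cyclicSuperchar_pow ωn _ _)
  rw [cyclicSuperchar_intCast_mul_add_mul_eq_sum_mul hpn ω hωp.symm hωn.symm hordp' hord hwv,
    hperiodic.sum_range_two_mul, Finset.mul_sum, Nat.mul_div_cancel_left _ two_pos,
    show r * (2 * h) / 2 = r * h by rw [mul_left_comm, Nat.mul_div_cancel_left _ two_pos]]
  refine Finset.sum_congr rfl fun j _ => ?_
  rw [cyclicSuperchar_pow_two_mul_pow_add_eq_conj ωn hv hneg', pow_add,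
    mul_comm _ ((ωp : ZMod p) ^ h), mul_assoc,
    cyclicSuperchar_mul_add_mul_conj_eq_gaussG hh hχ ⟨2 * m, hordp'⟩]

/-- (Theorem `shapethm`(a).) With `σ_ω` a cyclic supercharacter mod `pn`,
`ord(ω_n) = uv`, `gcd(v, ord(ω_p)) = 1`, `u` even, `v` odd, `ω_n^{uv/2} = -1`,
`ord(ω_p) = (p-1)/r`, `t` coprime to `p`, and `p ≡ 1 (mod 2ru)`, one has
`σ_ω(sp+tn) = (2/ru)·∑_{j=1}^{u/2} [(g_{ru/2}(ω^j t) - 1)·Re σ_{ω_n^u}(ω^j s)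
  + i·(g_{ru}(ω^j t) - g_{ru/2}(ω^j t))·Im σ_{ω_n^u}(ω^j s)]`. -/
theorem stmt16 (p n : ℕ) (hp : p.Prime) (hpodd : Odd p) (hn : 0 < n)
    (ω : (ZMod (p * n))ˣ)
    (ωp : (ZMod p)ˣ) (hωp : ωp = ZMod.unitsMap (dvd_mul_right p n) ω)
    (ωn : (ZMod n)ˣ) (hωn : ωn = ZMod.unitsMap (dvd_mul_left n p) ω)
    (u v : ℕ) (hord : orderOf ωn = u * v) (hcop : Nat.Coprime v (orderOf ωp))
    (hu : Even u) (hv : Odd v)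
    (hneg : (ωn : ZMod n) ^ (u * v / 2) = -1)
    (r : ℕ) (hr : 0 < r) (hordp : orderOf ωp = (p - 1) / r)
    (t : ℤ) (ht : IsCoprime t (p : ℤ)) (s : ℤ)
    (hmod : p ≡ 1 [MOD 2 * r * u]) :
    cyclicSuperchar (p * n) ω ((s * p + t * n : ℤ) : ZMod (p * n)) =
      (2 / ((r : ℂ) * u)) * ∑ j ∈ Finset.Icc 1 (u / 2),
        ((gaussG p (r * u / 2) ((ωp : ZMod p) ^ j * (t : ZMod p)) - 1) *
            ((cyclicSuperchar n (ωn ^ u) ((ωn : ZMod n) ^ j * (s : ZMod n))).re : ℂ) +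
          Complex.I *
            (gaussG p (r * u) ((ωp : ZMod p) ^ j * (t : ZMod p)) -
              gaussG p (r * u / 2) ((ωp : ZMod p) ^ j * (t : ZMod p))) *
            ((cyclicSuperchar n (ωn ^ u) ((ωn : ZMod n) ^ j * (s : ZMod n))).im : ℂ)) :=
  stmt16_general p n hp hn ω ωp hωp ωn hωn u v hord hcop hu hv hneg r hr hordp t s hmod
end
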